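/- Let I ⊆ ℝ be an open interval, let B : I → ℝ^{d×d} with entries b_{ij} and s : I → [0,∞)^d be continuous, and let p : [0,∞) × I → ℝ^d be continuously differentiable with p_i(a,t) ≥ 0, satisfying the McKendrick–von Förster equation ∂_t p_i(a,t) + ∂_a p_i(a,t) = Σ_{j=1}^{d} b_{ij}(t) p_j(a,t) for all a ≥ 0, t ∈ I, and the boundary condition p_i(0,t) = s_i(t). Assume for every t ∈ I and i: the functions a ↦ p_i(a,t) and a ↦ a·p_i(a,t) are integrable on [0,∞), a·p_i(a,t) → 0 as a → ∞, x_i(t) := ∫_0^∞ p_i(a,t) da > 0, the function x is differentiable with ẋ_i(t) = ∫_0^∞ ∂_t p_i(a,t) da, and t ↦ ∫_0^∞ a·p_i(a,t) da is differentiable with derivative ∫_0^∞ a·∂_t p_i(a,t) da. Then x solves ẋ = B(t)x + s(t), and the mean ages ā_i(t) := (∫_0^∞ a·p_i(a,t) da)/x_i(t) are differentiable and satisfy the mean age system: ā_i'(t) = 1 + (Σ_{j=1}^{d} (ā_j(t) − ā_i(t)) b_{ij}(t) x_j(t) − ā_i(t) s_i(t)) / x_i(t) for all i ∈ {1,…,d}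 and t ∈ I. -/

import Mathlib

/-!
Truncate the age integrals at an age that moves with the characteristics, `a ≤ c + t`. By
Leibniz's rule the truncated weighted moment `∫₀^{c+t} w(a) pᵢ(a,t) da` gains the flux
`w(c+t) pᵢ(c+t,t)` through the moving edge; after substituting the McKendrick–von Förster
equation and integrating `w ∂ₐpᵢ` by parts, this flux cancels exactly, leaving the closed system
`ẏᵢ = ∑ⱼ bᵢⱼ yⱼ + w(0) sᵢ + ∫₀^{c+t} w' pᵢ`. Since `p ≥ 0`, the truncated moments are dominated
by the full ones, so letting `c → ∞` in the integrated form gives `ẋ = Bx + s` (for `w = 1`) and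
`ṁ = Bm + x` (for `w(a) = a`); the mean age system is the quotient rule for `ā = m / x`.
-/

open MeasureTheory Set Filter Topology Function Interval

theorem hasDerivAt_intervalIntegral_of_continuousOn {U : Set ℝ} (hU : IsOpen U)
    {f ft : ℝ → ℝ → ℝ} {a b t : ℝ} (hf : ContinuousOn (uncurry f) (uIcc a b ×ˢ U))
    (hft : ContinuousOn (uncurry ft) (uIcc a b ×ˢ U))
    (hderiv : ∀ u ∈ uIcc a b, ∀ τ ∈ U, HasDerivAt (f u) (ft u τ) τ) (ht : t ∈ U) :
    HasDerivAt (fun τ => ∫ u in a..b, f u τ) (∫ u in a..b, ft u t) t := by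
  obtain ⟨ε, hε, hball⟩ := Metric.nhds_basis_closedBall.mem_iff.mp (hU.mem_nhds ht)
  have hK : uIcc a b ×ˢ Metric.closedBall t ε ⊆ uIcc a b ×ˢ U := prod_mono_right hball
  obtain ⟨C, hC⟩ := (isCompact_uIcc.prod (isCompact_closedBall t ε)).exists_bound_of_continuousOn
    (hft.mono hK)
  refine (intervalIntegral.hasDerivAt_integral_of_dominated_loc_of_deriv_le (bound := fun _ => C)
    (Metric.ball_mem_nhds t hε) ?_ ((hf.uncurry_right t ht).intervalIntegrable)
    ((hft.uncurry_right t ht).mono uIoc_subset_uIcc |>.aestronglyMeasurable measurableSet_uIoc)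
    (ae_of_all _ fun u hu τ hτ => hC (u, τ) ⟨uIoc_subset_uIcc hu, Metric.ball_subset_closedBall hτ⟩)
    intervalIntegrable_const
    (ae_of_all _ fun u hu τ hτ => hderiv u (uIoc_subset_uIcc hu) τ
      (hball (Metric.ball_subset_closedBall hτ)))).2
  filter_upwards [hU.mem_nhds ht] with τ hτ
  exact (hf.uncurry_right τ hτ).mono uIoc_subset_uIcc |>.aestronglyMeasurable measurableSet_uIoc

theorem hasDerivAt_intervalIntegral_moving_upper {S : Set (ℝ × ℝ)} {f : ℝ → ℝ → ℝ} {c t : ℝ}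
    (hS : S ∈ 𝓝 (c + t, t)) (hf : ContinuousOn (uncurry f) S) :
    HasDerivAt (fun τ => ∫ u in (c + t)..(c + τ), f u τ) (f (c + t) t) t := by
  rw [hasDerivAt_iff_isLittleO, Asymptotics.isLittleO_iff]
  intro ε hε
  have hnear : S ∩ uncurry f ⁻¹' Metric.ball (f (c + t) t) ε ∈ 𝓝 (c + t, t) :=
    inter_mem hS <| (hf.continuousAt hS).preimage_mem_nhds (Metric.ball_mem_nhds _ hε)
  obtain ⟨δ, hδ, hball⟩ := Metric.mem_nhds_iff.mp hnear
  filter_upwards [Metric.ball_mem_nhds t hδ] with τ hτ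
  have hsegment : ∀ u ∈ uIcc (c + t) (c + τ), (u, τ) ∈ Metric.ball (c + t, t) δ := by
    intro u hu
    have h := abs_sub_left_of_mem_uIcc hu
    rw [add_sub_add_left_eq_sub] at h
    rw [Metric.mem_ball, Real.dist_eq] at hτ
    simpa [Prod.dist_eq, Real.dist_eq, hτ] using h.trans_lt hτ
  have hint : IntervalIntegrable (f · τ) volume (c + t) (c + τ) :=
    ContinuousOn.intervalIntegrable <|
      hf.comp (continuous_id.prodMk continuous_const).continuousOn fun v hv =>
        (hball (hsegment v hv)).1
  have hclose : ∀ u ∈ Ι (c + t) (c + τ), ‖f u τ - f (c + t) t‖ ≤ ε := fun u hu =>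
    (hball (hsegment u (uIoc_subset_uIcc hu))).2.le
  calc ‖(∫ u in (c + t)..(c + τ), f u τ) - (∫ u in (c + t)..(c + t), f u t)
        - (τ - t) • f (c + t) t‖
      = ‖∫ u in (c + t)..(c + τ), (f u τ - f (c + t) t)‖ := by
        rw [intervalIntegral.integral_sub hint intervalIntegrable_const,
          intervalIntegral.integral_same, intervalIntegral.integral_const,
          add_sub_add_left_eq_sub, sub_zero]
    _ ≤ ε * |c + τ - (c + t)| := intervalIntegral.norm_integral_le_of_norm_le_const hclose
    _ = ε * ‖τ - t‖ := by rw [add_sub_add_left_eq_sub, Real.norm_eq_abs]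

theorem hasDerivAt_intervalIntegral_leibniz {U : Set ℝ} (hU : IsOpen U) {f ft : ℝ → ℝ → ℝ}
    {a c t : ℝ} (hf : ContinuousOn (uncurry f) (Ici a ×ˢ U))
    (hft : ContinuousOn (uncurry ft) (Ici a ×ˢ U))
    (hderiv : ∀ u, a ≤ u → ∀ τ ∈ U, HasDerivAt (f u) (ft u τ) τ) (ht : t ∈ U) (hct : a < c + t) :
    HasDerivAt (fun τ => ∫ u in a..c + τ, f u τ) (f (c + t) t + ∫ u in a..c + t, ft u t) t := by
  have hsub : uIcc a (c + t) ×ˢ U ⊆ Ici a ×ˢ U :=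
    prod_mono_left (uIcc_of_le hct.le ▸ Icc_subset_Ici_self)
  have hfixed := hasDerivAt_intervalIntegral_of_continuousOn hU (hf.mono hsub) (hft.mono hsub)
    (fun u hu => hderiv u (hsub (mk_mem_prod hu ht)).1) ht
  have hmoving := hasDerivAt_intervalIntegral_moving_upper
    (prod_mem_nhds (Ioi_mem_nhds hct) (hU.mem_nhds ht))
    (hf.mono (prod_mono_left Ioi_subset_Ici_self))
  rw [add_comm]
  refine (hfixed.add hmoving).congr_of_eventuallyEq ?_
  filter_upwards [hU.mem_nhds ht,
    continuousAt_const.eventually_lt (continuous_const.add continuous_id).continuousAt hct]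
    with τ hτ hcτ
  have hint : ∀ b, a ≤ b → IntervalIntegrable (f · τ) volume a b := fun b hb =>
    ((hf.uncurry_right τ hτ).mono (uIcc_of_le hb ▸ Icc_subset_Ici_self)).intervalIntegrable
  exact (intervalIntegral.integral_add_adjacent_intervals (hint _ hct.le)
    ((hint _ hct.le).symm.trans (hint _ hcτ.le))).symm

theorem hasDerivAt_of_tendsto_of_dominated {ι : Type*} {l : Filter ι} [l.IsCountablyGenerated]
    [l.NeBot] {U : Set ℝ} (hU : IsOpen U) [U.OrdConnected] {y F : ι → ℝ → ℝ}
    {y₀ F₀ bound : ℝ → ℝ} (hy : ∀ᶠ n in l, ∀ t ∈ U, HasDerivAt (y n) (F n t) t)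
    (hF : ∀ᶠ n in l, ContinuousOn (F n) U) (hbound : ∀ᶠ n in l, ∀ t ∈ U, |F n t| ≤ bound t)
    (hbound_cont : ContinuousOn bound U) (hy_lim : ∀ t ∈ U, Tendsto (y · t) l (𝓝 (y₀ t)))
    (hF_lim : ∀ t ∈ U, Tendsto (F · t) l (𝓝 (F₀ t))) (hF₀ : ContinuousOn F₀ U) {t : ℝ}
    (ht : t ∈ U) : HasDerivAt y₀ (F₀ t) t := by
  have hprimitive : ∀ τ ∈ U, y₀ τ = y₀ t + ∫ σ in t..τ, F₀ σ := by
    intro τ hτ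
    have hsub : uIcc t τ ⊆ U := OrdConnected.uIcc_subset ‹_› ht hτ
    have hsub' : Ι t τ ⊆ U := uIoc_subset_uIcc.trans hsub
    have hFTC : (fun n => ∫ σ in t..τ, F n σ) =ᶠ[l] (fun n => y n τ - y n t) := by
      filter_upwards [hy, hF] with n hyn hFn
      exact intervalIntegral.integral_eq_sub_of_hasDerivAt (fun σ hσ => hyn σ (hsub hσ))
        (hFn.mono hsub).intervalIntegrable
    have hlim : Tendsto (fun n => ∫ σ in t..τ, F n σ) l (𝓝 (∫ σ in t..τ, F₀ σ)) :=
      intervalIntegral.tendsto_integral_filter_of_dominated_convergence bound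
        (hF.mono fun n hn => (hn.mono hsub').aestronglyMeasurable measurableSet_uIoc)
        (hbound.mono fun n hn => ae_of_all _ fun σ hσ => hn σ (hsub' hσ))
        (hbound_cont.mono hsub).intervalIntegrable
        (ae_of_all _ fun σ hσ => hF_lim σ (hsub' hσ))
    have := tendsto_nhds_unique (hlim.congr' hFTC) ((hy_lim τ hτ).sub (hy_lim t ht))
    linarith
  have hderiv : HasDerivAt (fun τ => y₀ t + ∫ σ in t..τ, F₀ σ) (F₀ t) t :=
    (intervalIntegral.integral_hasDerivAt_right (IntervalIntegrable.refl)
      (hF₀.stronglyMeasurableAtFilter hU t ht) (hF₀.continuousAt (hU.mem_nhds ht))).const_add _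
  exact hderiv.congr_of_eventuallyEq (eventually_of_mem (hU.mem_nhds ht) hprimitive)

theorem abs_intervalIntegral_le_setIntegral_Ici {f : ℝ → ℝ} {a b : ℝ} (hab : a ≤ b)
    (hf : ∀ x, a ≤ x → 0 ≤ f x) (hint : IntegrableOn f (Ici a)) :
    |∫ x in a..b, f x| ≤ ∫ x in Ici a, f x := by
  rw [abs_of_nonneg (intervalIntegral.integral_nonneg hab fun x hx => hf x hx.1),
    intervalIntegral.integral_of_le hab]
  exact setIntegral_mono_set hint ((ae_restrict_iff' measurableSet_Ici).mpr (ae_of_all _ hf))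
    (Ioc_subset_Icc_self.trans Icc_subset_Ici_self).eventuallyLE

theorem tendsto_intervalIntegral_add_atTop {f : ℝ → ℝ} {a : ℝ} (hf : IntegrableOn f (Ici a))
    (τ : ℝ) : Tendsto (fun c => ∫ x in a..c + τ, f x) atTop (𝓝 (∫ x in Ici a, f x)) := by
  rw [integral_Ici_eq_integral_Ioi]
  exact intervalIntegral_tendsto_integral_Ioi a (hf.mono_set Ioi_subset_Ici_self)
    (tendsto_atTop_add_const_right _ τ tendsto_id)

structure IsAgeDensity {d : ℕ} (I : Set ℝ) (B : ℝ → Matrix (Fin d) (Fin d) ℝ)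
    (s : ℝ → Fin d → ℝ) (p pt pa : ℝ → ℝ → Fin d → ℝ) : Prop where
  continuousOn : ∀ i, ContinuousOn (fun q : ℝ × ℝ => p q.1 q.2 i) (Ici 0 ×ˢ I)
  continuousOn_dt : ∀ i, ContinuousOn (fun q : ℝ × ℝ => pt q.1 q.2 i) (Ici 0 ×ˢ I)
  continuousOn_da : ∀ i, ContinuousOn (fun q : ℝ × ℝ => pa q.1 q.2 i) (Ici 0 ×ˢ I)
  hasDerivAt_dt : ∀ a, 0 ≤ a → ∀ t ∈ I, ∀ i, HasDerivAt (fun t' => p a t' i) (pt a t i) t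
  hasDerivAt_da : ∀ a, 0 ≤ a → ∀ t ∈ I, ∀ i, HasDerivAt (fun a' => p a' t i) (pa a t i) a
  nonneg : ∀ a, 0 ≤ a → ∀ t ∈ I, ∀ i, 0 ≤ p a t i
  mcKendrick : ∀ a, 0 ≤ a → ∀ t ∈ I, ∀ i, pt a t i + pa a t i = ∑ j, B t i j * p a t j
  boundary : ∀ t ∈ I, ∀ i, p 0 t i = s t i

namespace IsAgeDensity

variable {d : ℕ} {I : Set ℝ} {B : ℝ → Matrix (Fin d) (Fin d) ℝ} {s : ℝ → Fin d → ℝ}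
  {p pt pa : ℝ → ℝ → Fin d → ℝ} {w w' : ℝ → ℝ}

theorem hasDerivAt_truncatedIntegral (hp : IsAgeDensity I B s p pt pa) (hI : IsOpen I)
    {v : ℝ → ℝ} (hv : Continuous v) {c t : ℝ} (ht : t ∈ I) (hct : 0 < c + t) (i : Fin d) :
    HasDerivAt (fun τ => ∫ a in 0..c + τ, v a * p a τ i)
      (v (c + t) * p (c + t) t i + ∫ a in 0..c + t, v a * pt a t i) t :=
  hasDerivAt_intervalIntegral_leibniz (f := fun a τ => v a * p a τ i)
    (ft := fun a τ => v a * pt a τ i) hI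
    ((hv.comp continuous_fst).continuousOn.mul (hp.continuousOn i))
    ((hv.comp continuous_fst).continuousOn.mul (hp.continuousOn_dt i))
    (fun a ha τ hτ => (hp.hasDerivAt_dt a ha τ hτ i).const_mul (v a)) ht hct

theorem hasDerivAt_truncatedMoment (hp : IsAgeDensity I B s p pt pa) (hI : IsOpen I)
    (hw : ∀ a, HasDerivAt w (w' a) a) (hw' : Continuous w') {c t : ℝ} (ht : t ∈ I)
    (hct : 0 < c + t) (i : Fin d) :
    HasDerivAt (fun τ => ∫ a in 0..c + τ, w a * p a τ i)
      (∑ j, B t i j * (∫ a in 0..c + t, w a * p a t j) + w 0 * s t i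
        + ∫ a in 0..c + t, w' a * p a t i) t := by
  have hwc : Continuous w := continuous_iff_continuousAt.2 fun a => (hw a).continuousAt
  have hsub : uIcc 0 (c + t) ⊆ Ici 0 := uIcc_of_le hct.le ▸ Icc_subset_Ici_self
  have hslice : ∀ {g : ℝ → ℝ → Fin d → ℝ},
      (∀ i, ContinuousOn (fun q : ℝ × ℝ => g q.1 q.2 i) (Ici 0 ×ˢ I)) →
      ∀ j, IntervalIntegrable (fun a => g a t j) volume 0 (c + t) := by
    intro g hg j
    exact ((hg j).uncurry_right (f := fun a τ => g a τ j) t ht).mono hsub |>.intervalIntegrable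
  have hwp : ∀ j, IntervalIntegrable (fun a => w a * p a t j) volume 0 (c + t) := fun j =>
    (hslice hp.continuousOn j).continuousOn_mul hwc.continuousOn
  have hwpa : IntervalIntegrable (fun a => w a * pa a t i) volume 0 (c + t) :=
    (hslice hp.continuousOn_da i).continuousOn_mul hwc.continuousOn
  have hdt : ∫ a in 0..c + t, w a * pt a t i
      = ∑ j, B t i j * (∫ a in 0..c + t, w a * p a t j) - ∫ a in 0..c + t, w a * pa a t i := by
    have hpt : ∀ a ∈ uIcc 0 (c + t),
        w a * pt a t i = ∑ j, B t i j * (w a * p a t j) - w a * pa a t i := by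
      intro a ha
      rw [eq_sub_of_add_eq (hp.mcKendrick a (hsub ha) t ht i), mul_sub, Finset.mul_sum]
      simp only [mul_left_comm]
    have hsum :
        IntervalIntegrable (fun a => ∑ j, B t i j * (w a * p a t j)) volume 0 (c + t) := by
      simpa only [Finset.sum_fn] using
        IntervalIntegrable.sum _ fun j _ => (hwp j).const_mul (B t i j)
    rw [intervalIntegral.integral_congr hpt, intervalIntegral.integral_sub hsum hwpa,
      intervalIntegral.integral_finsetSum fun j _ => (hwp j).const_mul _]
    simp only [intervalIntegral.integral_const_mul]
  have hda : ∫ a in 0..c + t, w a * pa a t i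
      = w (c + t) * p (c + t) t i - w 0 * s t i - ∫ a in 0..c + t, w' a * p a t i := by
    rw [intervalIntegral.integral_mul_deriv_eq_deriv_mul (fun a _ => hw a)
      (fun a ha => hp.hasDerivAt_da a (hsub ha) t ht i) (hw'.intervalIntegrable _ _)
      (hslice hp.continuousOn_da i), hp.boundary t ht i]
  convert hp.hasDerivAt_truncatedIntegral hI hwc ht hct i using 1
  rw [hdt, hda]
  ring

theorem hasDerivAt_moment (hp : IsAgeDensity I B s p pt pa) (hI : IsOpen I)
    (hB : ContinuousOn B I) (hs : ContinuousOn s I) (hw : ∀ a, HasDerivAt w (w' a) a)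
    (hw' : Continuous w') (hw_nonneg : ∀ a, 0 ≤ a → 0 ≤ w a) (hw'_nonneg : ∀ a, 0 ≤ a → 0 ≤ w' a)
    (hwp : ∀ t ∈ I, ∀ i, IntegrableOn (fun a => w a * p a t i) (Ici 0))
    (hw'p : ∀ t ∈ I, ∀ i, IntegrableOn (fun a => w' a * p a t i) (Ici 0))
    {M M' : ℝ → Fin d → ℝ} (hM : ∀ t ∈ I, ∀ i, M t i = ∫ a in Ici 0, w a * p a t i)
    (hM' : ∀ t ∈ I, ∀ i, M' t i = ∫ a in Ici 0, w' a * p a t i)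
    (hM_cont : ∀ i, ContinuousOn (M · i) I) (hM'_cont : ∀ i, ContinuousOn (M' · i) I)
    {t : ℝ} (ht : t ∈ I) (i : Fin d) :
    HasDerivAt (M · i) (∑ j, B t i j * M t j + w 0 * s t i + M' t i) t := by
  obtain ⟨l, u, htlu, hlu⟩ := mem_nhds_iff_exists_Ioo_subset.mp (hI.mem_nhds ht)
  set K : ℝ → ℝ → Fin d → ℝ := fun c τ j => ∫ a in 0..c + τ, w a * p a τ j
  set K' : ℝ → ℝ → Fin d → ℝ := fun c τ j => ∫ a in 0..c + τ, w' a * p a τ j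
  have hB' : ∀ j, ContinuousOn (fun τ => B τ i j) I := fun j =>
    (continuous_apply_apply i j).comp_continuousOn hB
  have hs' : ContinuousOn (fun τ => s τ i) I := (continuous_apply i).comp_continuousOn hs
  have hpos : ∀ᶠ c in atTop, ∀ τ ∈ Ioo l u, 0 < c + τ := by
    filter_upwards [eventually_ge_atTop (-l)] with c hc τ hτ
    linarith [hτ.1]
  have hwc : Continuous w := continuous_iff_continuousAt.2 fun a => (hw a).continuousAt
  have hK_cont : ∀ᶠ c in atTop, ∀ j,
      ContinuousOn (K c · j) (Ioo l u) ∧ ContinuousOn (K' c · j) (Ioo l u) := by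
    filter_upwards [hpos] with c hc j
    exact ⟨fun τ hτ => (hp.hasDerivAt_truncatedIntegral hI hwc (hlu hτ) (hc τ hτ) j)
      |>.continuousAt.continuousWithinAt,
      fun τ hτ => (hp.hasDerivAt_truncatedIntegral hI hw' (hlu hτ) (hc τ hτ) j)
      |>.continuousAt.continuousWithinAt⟩
  have hK_lim : ∀ τ ∈ Ioo l u, ∀ j, Tendsto (K · τ j) atTop (𝓝 (M τ j)) := fun τ hτ j =>
    hM τ (hlu hτ) j ▸ tendsto_intervalIntegral_add_atTop (hwp τ (hlu hτ) j) τ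
  have hK'_lim : ∀ τ ∈ Ioo l u, ∀ j, Tendsto (K' · τ j) atTop (𝓝 (M' τ j)) := fun τ hτ j =>
    hM' τ (hlu hτ) j ▸ tendsto_intervalIntegral_add_atTop (hw'p τ (hlu hτ) j) τ
  refine hasDerivAt_of_tendsto_of_dominated (l := atTop) isOpen_Ioo (y := fun c τ => K c τ i)
    (F := fun c τ => ∑ j, B τ i j * K c τ j + w 0 * s τ i + K' c τ i)
    (y₀ := (M · i)) (F₀ := fun τ => ∑ j, B τ i j * M τ j + w 0 * s τ i + M' τ i)
    (bound := fun τ => ∑ j, |B τ i j| * M τ j + |w 0| * |s τ i| + M' τ i) ?_ ?_ ?_ ?_ ?_ ?_ ?_ htlu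
  · filter_upwards [hpos] with c hc τ hτ
    exact hp.hasDerivAt_truncatedMoment hI hw hw' (hlu hτ) (hc τ hτ) i
  · filter_upwards [hK_cont] with c hc
    exact ((continuousOn_finsetSum _ fun j _ => ((hB' j).mono hlu).mul (hc j).1).add
      (continuousOn_const.mul (hs'.mono hlu))).add (hc i).2
  · filter_upwards [hpos] with c hc τ hτ
    have hKle : ∀ j, |K c τ j| ≤ M τ j := fun j => hM τ (hlu hτ) j ▸
      abs_intervalIntegral_le_setIntegral_Ici (hc τ hτ).le
        (fun a ha => mul_nonneg (hw_nonneg a ha) (hp.nonneg a ha τ (hlu hτ) j)) (hwp τ (hlu hτ) j)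
    have hK'le : |K' c τ i| ≤ M' τ i := hM' τ (hlu hτ) i ▸
      abs_intervalIntegral_le_setIntegral_Ici (hc τ hτ).le
        (fun a ha => mul_nonneg (hw'_nonneg a ha) (hp.nonneg a ha τ (hlu hτ) i)) (hw'p τ (hlu hτ) i)
    have hsum : |∑ j, B τ i j * K c τ j| ≤ ∑ j, |B τ i j| * M τ j :=
      (Finset.abs_sum_le_sum_abs _ _).trans <| Finset.sum_le_sum fun j _ => by
        rw [abs_mul]; exact mul_le_mul_of_nonneg_left (hKle j) (abs_nonneg _)
    have h₁ := abs_add_le (∑ j, B τ i j * K c τ j + w 0 * s τ i) (K' c τ i)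
    have h₂ := abs_add_le (∑ j, B τ i j * K c τ j) (w 0 * s τ i)
    rw [abs_mul] at h₂
    linarith
  · exact ((continuousOn_finsetSum _ fun j _ => (hB' j).abs.mul (hM_cont j)).add
      (continuousOn_const.mul hs'.abs)).add (hM'_cont i) |>.mono hlu
  · exact fun τ hτ => hK_lim τ hτ i
  · exact fun τ hτ => (((tendsto_finsetSum _ fun j _ => (hK_lim τ hτ j).const_mul _).add_const
      _).add (hK'_lim τ hτ i))
  · exact ((continuousOn_finsetSum _ fun j _ => (hB' j).mul (hM_cont j)).add
      (continuousOn_const.mul hs')).add (hM'_cont i) |>.mono hlu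

end IsAgeDensity

theorem hasDerivAt_meanAge {d : ℕ} {x m : ℝ → Fin d → ℝ} {b : Fin d → ℝ} {σ t : ℝ} {i : Fin d}
    (hx : HasDerivAt (x · i) (∑ j, b j * x t j + σ) t)
    (hm : HasDerivAt (m · i) (∑ j, b j * m t j + x t i) t) (hx0 : ∀ j, x t j ≠ 0) :
    HasDerivAt (fun τ => m τ i / x τ i)
      (1 + (∑ j, (m t j / x t j - m t i / x t i) * (b j * x t j) - m t i / x t i * σ) / x t i)
      t := by
  have hsum : ∑ j, (m t j / x t j - m t i / x t i) * (b j * x t j)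
      = ∑ j, b j * m t j - m t i / x t i * ∑ j, b j * x t j := by
    rw [Finset.mul_sum, ← Finset.sum_sub_distrib]
    refine Finset.sum_congr rfl fun j _ => ?_
    field_simp [hx0 j]
  refine (hm.div hx (hx0 i)).congr_deriv ?_
  rw [hsum]
  field_simp [hx0 i]
  ring

theorem stmt_7_general (d : ℕ) (I : Set ℝ) (hIopen : IsOpen I)
    (B : ℝ → Matrix (Fin d) (Fin d) ℝ) (s : ℝ → (Fin d → ℝ))
    (hBcont : ContinuousOn B I) (hscont : ContinuousOn s I)
    (p pt pa : ℝ → ℝ → Fin d → ℝ)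
    -- `p` is continuously differentiable on `[0,∞) × I`, with partial derivatives `pa`, `pt`:
    (hpcont : ∀ i : Fin d, ContinuousOn (fun q : ℝ × ℝ => p q.1 q.2 i) (Set.Ici 0 ×ˢ I))
    (hptcont : ∀ i : Fin d, ContinuousOn (fun q : ℝ × ℝ => pt q.1 q.2 i) (Set.Ici 0 ×ˢ I))
    (hpacont : ∀ i : Fin d, ContinuousOn (fun q : ℝ × ℝ => pa q.1 q.2 i) (Set.Ici 0 ×ˢ I))
    (hpt : ∀ a : ℝ, 0 ≤ a → ∀ t ∈ I, ∀ i : Fin d,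
      HasDerivAt (fun t' => p a t' i) (pt a t i) t)
    (hpa : ∀ a : ℝ, 0 ≤ a → ∀ t ∈ I, ∀ i : Fin d,
      HasDerivAt (fun a' => p a' t i) (pa a t i) a)
    -- nonnegativity of the density:
    (hpnn : ∀ a : ℝ, 0 ≤ a → ∀ t ∈ I, ∀ i : Fin d, 0 ≤ p a t i)
    -- the McKendrick–von Förster equation:
    (hMvF : ∀ a : ℝ, 0 ≤ a → ∀ t ∈ I, ∀ i : Fin d,
      pt a t i + pa a t i = ∑ j, B t i j * p a t j)
    -- the boundary condition:
    (hbdry : ∀ t ∈ I, ∀ i : Fin d, p 0 t i = s t i)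
    -- integrability and decay assumptions:
    (hp_int : ∀ t ∈ I, ∀ i : Fin d, IntegrableOn (fun a => p a t i) (Set.Ici 0))
    (hap_int : ∀ t ∈ I, ∀ i : Fin d, IntegrableOn (fun a => a * p a t i) (Set.Ici 0))
    -- the pool contents and their positivity:
    (x : ℝ → Fin d → ℝ)
    (hxdef : ∀ t ∈ I, ∀ i : Fin d, x t i = ∫ a in Set.Ici (0 : ℝ), p a t i)
    (hxpos : ∀ t ∈ I, ∀ i : Fin d, 0 < x t i)
    -- differentiation under the integral sign:
    (hxderiv : ∀ t ∈ I, ∀ i : Fin d,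
      HasDerivAt (fun t' => x t' i) (∫ a in Set.Ici (0 : ℝ), pt a t i) t)
    (hmderiv : ∀ t ∈ I, ∀ i : Fin d,
      HasDerivAt (fun t' => ∫ a in Set.Ici (0 : ℝ), a * p a t' i)
        (∫ a in Set.Ici (0 : ℝ), a * pt a t i) t)
    -- the mean ages:
    (abar : ℝ → Fin d → ℝ)
    (habardef : ∀ t ∈ I, ∀ i : Fin d,
      abar t i = (∫ a in Set.Ici (0 : ℝ), a * p a t i) / x t i) :
    (∀ t ∈ I, ∀ i : Fin d,
      HasDerivAt (fun t' => x t' i) ((∑ j, B t i j * x t j) + s t i) t) ∧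
    (∀ t ∈ I, ∀ i : Fin d,
      HasDerivAt (fun t' => abar t' i)
        (1 + ((∑ j, (abar t j - abar t i) * (B t i j * x t j)) - abar t i * s t i)
          / x t i) t) := by
  have hp : IsAgeDensity I B s p pt pa := ⟨hpcont, hptcont, hpacont, hpt, hpa, hpnn, hMvF, hbdry⟩
  have hx_cont : ∀ i, ContinuousOn (x · i) I := fun i t ht =>
    (hxderiv t ht i).continuousAt.continuousWithinAt
  have hx : ∀ t ∈ I, ∀ i, HasDerivAt (x · i) (∑ j, B t i j * x t j + s t i) t := fun t ht i => by
    simpa using hp.hasDerivAt_moment hIopen hBcont hscont (w := fun _ => 1) (w' := fun _ => 0)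
      (M' := 0) (fun a => hasDerivAt_const a 1) continuous_const (fun _ _ => zero_le_one)
      (fun _ _ => le_rfl) (by simpa using hp_int) (by simp) (by simpa using hxdef) (by simp)
      hx_cont (fun _ => continuousOn_const) ht i
  have hm : ∀ t ∈ I, ∀ i, HasDerivAt (fun τ => ∫ a in Ici 0, a * p a τ i)
      (∑ j, B t i j * (∫ a in Ici 0, a * p a t j) + x t i) t := fun t ht i => by
    simpa using hp.hasDerivAt_moment hIopen hBcont hscont (w := id) (w' := fun _ => 1)
      (M := fun τ j => ∫ a in Ici 0, a * p a τ j) (M' := x) hasDerivAt_id continuous_const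
      (fun _ h => h) (fun _ _ => zero_le_one) hap_int (by simpa using hp_int) (fun _ _ _ => rfl)
      (by simpa using hxdef) (fun i t ht => (hmderiv t ht i).continuousAt.continuousWithinAt)
      hx_cont ht i
  refine ⟨hx, fun t ht i => ?_⟩
  have hmean := hasDerivAt_meanAge (m := fun τ j => ∫ a in Ici 0, a * p a τ j) (hx t ht i)
    (hm t ht i) fun j => (hxpos t ht j).ne'
  simp only [← habardef t ht] at hmean
  exact hmean.congr_of_eventuallyEq
    (eventually_of_mem (hIopen.mem_nhds ht) fun τ hτ => habardef τ hτ i)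

/-- the mean age system.
Given a nonautonomous compartmental system with coefficient matrix `B` and input `s` on an
open interval `I`, and a nonnegative `C¹` age-density `p(a,t)` solving the
McKendrick–von Förster equation `∂ₜ pᵢ + ∂ₐ pᵢ = ∑ⱼ bᵢⱼ(t) pⱼ` with boundary condition
`pᵢ(0,t) = sᵢ(t)`, under the stated integrability, decay, positivity and differentiation-
under-the-integral assumptions, the pool contents `xᵢ(t) = ∫₀^∞ pᵢ(a,t) da` solve
`ẋ = B(t)x + s(t)` and the mean ages `āᵢ(t) = (∫₀^∞ a pᵢ(a,t) da)/xᵢ(t)` solve the mean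
age system `āᵢ' = 1 + (∑ⱼ (āⱼ − āᵢ) bᵢⱼ(t) xⱼ(t) − āᵢ sᵢ(t))/xᵢ(t)`. -/
theorem stmt_7 (d : ℕ) (I : Set ℝ) (hIopen : IsOpen I) (hIconn : I.OrdConnected)
    (B : ℝ → Matrix (Fin d) (Fin d) ℝ) (s : ℝ → (Fin d → ℝ))
    (hBcont : ContinuousOn B I) (hscont : ContinuousOn s I)
    (hsnn : ∀ t ∈ I, ∀ i : Fin d, 0 ≤ s t i)
    (p pt pa : ℝ → ℝ → Fin d → ℝ)
    -- `p` is continuously differentiable on `[0,∞) × I`, with partial derivatives `pa`, `pt`: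
    (hpcont : ∀ i : Fin d, ContinuousOn (fun q : ℝ × ℝ => p q.1 q.2 i) (Set.Ici 0 ×ˢ I))
    (hptcont : ∀ i : Fin d, ContinuousOn (fun q : ℝ × ℝ => pt q.1 q.2 i) (Set.Ici 0 ×ˢ I))
    (hpacont : ∀ i : Fin d, ContinuousOn (fun q : ℝ × ℝ => pa q.1 q.2 i) (Set.Ici 0 ×ˢ I))
    (hpt : ∀ a : ℝ, 0 ≤ a → ∀ t ∈ I, ∀ i : Fin d,
      HasDerivAt (fun t' => p a t' i) (pt a t i) t)
    (hpa : ∀ a : ℝ, 0 ≤ a → ∀ t ∈ I, ∀ i : Fin d,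
      HasDerivAt (fun a' => p a' t i) (pa a t i) a)
    -- nonnegativity of the density:
    (hpnn : ∀ a : ℝ, 0 ≤ a → ∀ t ∈ I, ∀ i : Fin d, 0 ≤ p a t i)
    -- the McKendrick–von Förster equation:
    (hMvF : ∀ a : ℝ, 0 ≤ a → ∀ t ∈ I, ∀ i : Fin d,
      pt a t i + pa a t i = ∑ j, B t i j * p a t j)
    -- the boundary condition:
    (hbdry : ∀ t ∈ I, ∀ i : Fin d, p 0 t i = s t i)
    -- integrability and decay assumptions:
    (hp_int : ∀ t ∈ I, ∀ i : Fin d, IntegrableOn (fun a => p a t i) (Set.Ici 0))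
    (hap_int : ∀ t ∈ I, ∀ i : Fin d, IntegrableOn (fun a => a * p a t i) (Set.Ici 0))
    (hdecay : ∀ t ∈ I, ∀ i : Fin d,
      Filter.Tendsto (fun a => a * p a t i) Filter.atTop (nhds 0))
    -- the pool contents and their positivity:
    (x : ℝ → Fin d → ℝ)
    (hxdef : ∀ t ∈ I, ∀ i : Fin d, x t i = ∫ a in Set.Ici (0 : ℝ), p a t i)
    (hxpos : ∀ t ∈ I, ∀ i : Fin d, 0 < x t i)
    -- differentiation under the integral sign:
    (hxderiv : ∀ t ∈ I, ∀ i : Fin d,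
      HasDerivAt (fun t' => x t' i) (∫ a in Set.Ici (0 : ℝ), pt a t i) t)
    (hmderiv : ∀ t ∈ I, ∀ i : Fin d,
      HasDerivAt (fun t' => ∫ a in Set.Ici (0 : ℝ), a * p a t' i)
        (∫ a in Set.Ici (0 : ℝ), a * pt a t i) t)
    -- the mean ages:
    (abar : ℝ → Fin d → ℝ)
    (habardef : ∀ t ∈ I, ∀ i : Fin d,
      abar t i = (∫ a in Set.Ici (0 : ℝ), a * p a t i) / x t i) :
    (∀ t ∈ I, ∀ i : Fin d,
      HasDerivAt (fun t' => x t' i) ((∑ j, B t i j * x t j) + s t i) t) ∧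
    (∀ t ∈ I, ∀ i : Fin d,
      HasDerivAt (fun t' => abar t' i)
        (1 + ((∑ j, (abar t j - abar t i) * (B t i j * x t j)) - abar t i * s t i)
          / x t i) t) :=
  stmt_7_general d I hIopen B s hBcont hscont p pt pa hpcont hptcont hpacont hpt hpa hpnn hMvF hbdry
    hp_int hap_int x hxdef hxpos hxderiv hmderiv abar habardef
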